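/- arXiv:0707.2831 — 6 statements merged into one kernel-verified Lean document; each statement's English description precedes it below -/
import Mathlib

section
/- The map z restricted to admissible strings of length n that begin with p (i.e., s_n = 0) is a bijection onto {0, ..., f_{n+1} − 1}. -/
open Finset

private def Zk (m : ℕ) (s : ℕ → Bool) : ℕ :=
  ∑ i ∈ Finset.range m, if s i then Nat.fib (i + 2) else 0

private lemma Zk_succ (m : ℕ) (s : ℕ → Bool) :
    Zk (m + 1) s = Zk m s + if s m then Nat.fib (m + 2) else 0 :=
  Finset.sum_range_succ _ _

private lemma Zk_congr (m : ℕ) (s t : ℕ → Bool) (h : ∀ i, i < m → s i = t i) :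
    Zk m s = Zk m t :=
  Finset.sum_congr rfl (fun i hi => by rw [h i (Finset.mem_range.mp hi)])

private lemma Zk_bound : ∀ m, ∀ s : ℕ → Bool,
    (∀ i, i + 1 < m → ¬(s i = true ∧ s (i + 1) = true)) → Zk m s < Nat.fib (m + 2) := by
  intro m
  induction m using Nat.strong_induction_on with
  | _ m ih =>
    intro s hs
    match m with
    | 0 => simp [Zk]
    | 1 =>
      rw [Zk_succ]
      have h0 : Zk 0 s = 0 := by simp [Zk]
      rw [h0]
      by_cases h : s 0 = true <;> simp [h, Nat.fib]
    | (k + 2) =>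
      rw [show Nat.fib (k + 2 + 2) = Nat.fib (k + 4) from rfl]
      rw [show Zk (k + 2) s = Zk (k + 1) s + (if s (k + 1) = true then Nat.fib (k + 3) else 0)
        from Zk_succ (k + 1) s]
      by_cases h : s (k + 1) = true
      · have hk : s k = false := by
          cases hsk : s k with
          | false => rfl
          | true => exact absurd ⟨hsk, h⟩ (hs k (by omega))
        rw [Zk_succ, hk]
        have h1 : Zk k s < Nat.fib (k + 2) := ih k (by omega) s (fun i hi => hs i (by omega))
        have h2 : Nat.fib (k + 4) = Nat.fib (k + 2) + Nat.fib (k + 3) := Nat.fib_add_two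
        simp only [h, if_true, Bool.false_eq_true, if_false]
        omega
      · simp only [if_neg h, add_zero]
        have h1 : Zk (k + 1) s < Nat.fib (k + 3) := by
          have := ih (k + 1) (by omega) s (fun i hi => hs i (by omega))
          rwa [show Nat.fib (k + 1 + 2) = Nat.fib (k + 3) from rfl] at this
        have h2 : Nat.fib (k + 3) ≤ Nat.fib (k + 4) := Nat.fib_le_fib_succ
        omega

private lemma Zk_inj : ∀ m, ∀ s t : ℕ → Bool,
    (∀ i, i + 1 < m → ¬(s i = true ∧ s (i + 1) = true)) →
    (∀ i, i + 1 < m → ¬(t i = true ∧ t (i + 1) = true)) →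
    Zk m s = Zk m t → ∀ i, i < m → s i = t i := by
  intro m
  induction m using Nat.strong_induction_on with
  | _ m ih =>
    match m with
    | 0 => intro s t _ _ _ i hi; omega
    | (k + 1) =>
      intro s t hs ht hz i hi
      have hsk : Zk k s < Nat.fib (k + 2) := Zk_bound k s (fun i hi => hs i (by omega))
      have htk : Zk k t < Nat.fib (k + 2) := Zk_bound k t (fun i hi => ht i (by omega))
      rw [Zk_succ, Zk_succ] at hz
      have heq : s k = t k := by
        by_cases h1 : s k = true <;> by_cases h2 : t k = true
        · rw [h1, h2]
        · simp [h1, h2] at hz; omega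
        · simp [h1, h2] at hz; omega
        · simp only [Bool.not_eq_true] at h1 h2; rw [h1, h2]
      rcases Nat.lt_or_ge i k with h | h
      · have hz' : Zk k s = Zk k t := by
          rw [heq] at hz
          by_cases h2 : t k = true <;> simp [h2] at hz <;> omega
        exact ih k (by omega) s t (fun i hi => hs i (by omega)) (fun i hi => ht i (by omega)) hz' i h
      · have hik : i = k := by omega
        rw [hik]; exact heq

private lemma Zk_surj : ∀ m, ∀ k, k < Nat.fib (m + 2) →
    ∃ s : ℕ → Bool, (∀ i, ¬(s i = true ∧ s (i + 1) = true)) ∧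
      (∀ i, m ≤ i → s i = false) ∧ Zk m s = k := by
  intro m
  induction m using Nat.strong_induction_on with
  | _ m ih =>
    match m with
    | 0 =>
      intro k hk
      have hk0 : k = 0 := by
        have e : Nat.fib (0 + 2) = 1 := rfl
        omega
      exact ⟨fun _ => false, by simp, by simp, by simp [Zk, hk0]⟩
    | (j + 1) =>
      intro k hk
      by_cases h : k < Nat.fib (j + 2)
      · obtain ⟨s, h1, h2, h3⟩ := ih j (by omega) k h
        refine ⟨s, h1, fun i hi => h2 i (by omega), ?_⟩
        rw [Zk_succ, h2 j le_rfl]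
        simpa using h3
      · match j with
        | 0 =>
          have hk1 : k = 1 := by
            have e2 : Nat.fib (0 + 2) = 1 := rfl
            have e3 : Nat.fib (0 + 1 + 2) = 2 := rfl
            omega
          refine ⟨fun i => decide (i = 0), ?_, ?_, ?_⟩
          · intro i; simp
          · intro i hi; simp; omega
          · simp [Zk, hk1]
        | (l + 1) =>
          rw [show l + 1 + 1 + 2 = l + 4 from rfl] at hk
          rw [show l + 1 + 2 = l + 3 from rfl] at h
          have hfib : Nat.fib (l + 4) = Nat.fib (l + 2) + Nat.fib (l + 3) := Nat.fib_add_two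
          have hk2 : k - Nat.fib (l + 3) < Nat.fib (l + 2) := by omega
          obtain ⟨t, h1, h2, h3⟩ := ih l (by omega) (k - Nat.fib (l + 3)) hk2
          set u : ℕ → Bool := fun i => if i = l + 1 then true else t i with hu
          have hu1 : u (l + 1) = true := if_pos rfl
          have hun : ∀ i, i ≠ l + 1 → u i = t i := fun i hi => if_neg hi
          refine ⟨u, ?_, ?_, ?_⟩
          · intro i
            by_cases e1 : i = l + 1
            · subst e1
              rintro ⟨-, hb⟩
              rw [hun (l + 1 + 1) (by omega), h2 (l + 1 + 1) (by omega)] at hb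
              simp at hb
            · by_cases e2 : i + 1 = l + 1
              · rintro ⟨ha, -⟩
                rw [hun i e1, h2 i (by omega)] at ha
                simp at ha
              · rintro ⟨ha, hb⟩
                rw [hun i e1] at ha
                rw [hun (i + 1) e2] at hb
                exact h1 i ⟨ha, hb⟩
          · intro i hi
            rw [hun i (by omega)]
            exact h2 i (by omega)
          · rw [Zk_succ, hu1, if_pos rfl]
            have e : Zk (l + 1) u = Zk (l + 1) t :=
              Zk_congr _ _ _ (fun i hi => hun i (by omega))
            have e2 : Zk (l + 1) t = Zk l t := by
              rw [Zk_succ, h2 l le_rfl]; simp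
            rw [e, e2, h3]
            rw [show Nat.fib (l + 1 + 2) = Nat.fib (l + 3) from rfl]
            omega

open Finset in
/-- The Zeckendorf map `z` restricted to admissible strings of length `n` that
begin with `p` (i.e. the highest-indexed symbol `s_n` is `0`) is a bijection
onto `{0, ..., f (n+1) - 1}`. -/
theorem zeckendorf_bijOn_startP (n : ℕ) (hn : 0 < n) :
    Set.BijOn
      (fun s : Fin n → Bool => ∑ i : Fin n, if s i then Nat.fib ((i : ℕ) + 2) else 0)
      {s : Fin n → Bool |
        (∀ i j : Fin n, (j : ℕ) = (i : ℕ) + 1 → ¬(s i = true ∧ s j = true)) ∧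
        s ⟨n - 1, by omega⟩ = false}
      (Set.Iio (Nat.fib (n + 1))) := by
  have hn1 : n - 1 + 1 = n := by omega
  set ext : (Fin n → Bool) → (ℕ → Bool) :=
    fun s i => if h : i < n then s ⟨i, h⟩ else false with hext
  have hsum : ∀ s : Fin n → Bool,
      (∑ i : Fin n, if s i then Nat.fib ((i : ℕ) + 2) else 0) = Zk n (ext s) := by
    intro s
    rw [Zk, ← Fin.sum_univ_eq_sum_range (fun i => if ext s i then Nat.fib (i + 2) else 0) n]
    apply Finset.sum_congr rfl
    intro i _
    simp [hext, i.isLt]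
  have hadm : ∀ s : Fin n → Bool,
      (∀ i j : Fin n, (j : ℕ) = (i : ℕ) + 1 → ¬(s i = true ∧ s j = true)) →
      ∀ i, i + 1 < n → ¬(ext s i = true ∧ ext s (i + 1) = true) := by
    intro s hs i hi
    have h1 : i < n := by omega
    simp only [hext, dif_pos h1, dif_pos hi]
    exact hs ⟨i, h1⟩ ⟨i + 1, hi⟩ rfl
  have htop : ∀ s : Fin n → Bool, s ⟨n - 1, by omega⟩ = false →
      Zk n (ext s) = Zk (n - 1) (ext s) := by
    intro s hs
    conv_lhs => rw [← hn1]
    rw [Zk_succ]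
    have he : ext s (n - 1) = false := by
      simp only [hext, dif_pos (by omega : n - 1 < n)]
      exact hs
    rw [he]
    simp
  refine ⟨?_, ?_, ?_⟩
  · rintro s ⟨hs1, hs2⟩
    simp only [Set.mem_Iio]
    rw [hsum s, htop s hs2]
    have hb := Zk_bound (n - 1) (ext s) (fun i hi => hadm s hs1 i (by omega))
    rwa [show n - 1 + 2 = n + 1 from by omega] at hb
  · rintro s ⟨hs1, _⟩ t ⟨ht1, _⟩ hst
    simp only at hst
    rw [hsum s, hsum t] at hst
    have key := Zk_inj n (ext s) (ext t) (hadm s hs1) (hadm t ht1) hst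
    funext i
    have h1 := key i i.isLt
    simpa [hext, i.isLt] using h1
  · intro k hk
    simp only [Set.mem_Iio] at hk
    have hk' : k < Nat.fib (n - 1 + 2) := by
      rwa [show n - 1 + 2 = n + 1 from by omega]
    obtain ⟨t, h1, h2, h3⟩ := Zk_surj (n - 1) k hk'
    refine ⟨fun i => t i, ⟨?_, ?_⟩, ?_⟩
    · intro i j hij
      have hh := h1 i
      rw [← hij] at hh
      exact hh
    · exact h2 (n - 1) le_rfl
    · simp only
      rw [hsum]
      have e : Zk n (ext (fun i => t ↑i)) = Zk n t := by
        apply Finset.sum_congr rfl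
        intro i hi
        rw [Finset.mem_range] at hi
        simp [hext, hi]
      rw [e]
      have e2 : Zk n t = Zk (n - 1) t := by
        conv_lhs => rw [← hn1, Zk_succ, h2 (n - 1) le_rfl]
        simp
      rw [e2, h3]
end

section
/- Let A = e^{−3πi/5}, τ = 2/(1+√5), φ = (1+√5)/2, c = A⁸τ² − A⁴τ, e = A⁸τ − A⁴τ², a = −A⁴, and δ = A − 1. Then c = 1/δ and φ·e + a = φ²/δ. -/
/-!
`A` lies on the unit circle with `A + A⁻¹ = 2 cos (3π/5) = 1 - φ`, so it is a root of
`X² - (1 - φ) X + 1` over `ℚ(√5)`. Modulo this quadratic and `φ² = φ + 1` one gets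
`A⁴ = A + φ - 1` and `A⁸ = (φ - 1)(A - 1)`, after which `c · δ = 1` and `(φ e + a) · δ = φ²`
are polynomial identities; the first of them also shows `δ ≠ 0`.
-/

theorem Complex.exp_mul_I_sq_add_one (z : ℂ) :
    exp (z * I) ^ 2 + 1 = 2 * cos z * exp (z * I) := by
  rw [two_cos, add_mul, ← exp_add, ← exp_add, sq, ← exp_add]
  ring_nf
  rw [exp_zero, add_comm]

theorem Real.two_mul_cos_three_pi_div_five : 2 * cos (3 * Real.pi / 5) = 1 - goldenRatio := by
  rw [show 3 * Real.pi / 5 = Real.pi - 2 * (Real.pi / 5) by ring, cos_pi_sub, cos_two_mul,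
    cos_pi_div_five, goldenRatio]
  nlinarith [sq_sqrt (show (0 : ℝ) ≤ 5 by norm_num)]

theorem golden_root_mul_sub_one_identities {R : Type*} [CommRing R] {φ τ A : R}
    (hφ : φ ^ 2 = φ + 1) (hτ : φ * τ = 1) (hA : A ^ 2 + 1 = (1 - φ) * A) :
    (A ^ 8 * τ ^ 2 - A ^ 4 * τ) * (A - 1) = 1 ∧
      (φ * (A ^ 8 * τ - A ^ 4 * τ ^ 2) + -A ^ 4) * (A - 1) = φ ^ 2 := by
  have hτ' : τ = φ - 1 := by linear_combination (φ - 1) * hτ - τ * hφ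
  have h4 : A ^ 4 = A + φ - 1 := by grind
  have h8 : A ^ 8 = (φ - 1) * (A - 1) := by grind
  subst hτ'
  rw [h4, h8]
  constructor <;> grind

open Complex in
/-- With `A = e^{-3πi/5}`, `τ = 2/(1+√5)`, `φ = (1+√5)/2`, `c = A⁸τ² - A⁴τ`,
`e = A⁸τ - A⁴τ²`, `a = -A⁴` and `δ = A - 1`, one has `c = 1/δ` and
`φ·e + a = φ²/δ`. -/
theorem fib_rep_delta_identities :
    let A : ℂ := Complex.exp (-3 * Real.pi * Complex.I / 5)
    let τ : ℂ := 2 / (1 + Real.sqrt 5)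
    let φ : ℂ := (1 + Real.sqrt 5) / 2
    let c : ℂ := A ^ 8 * τ ^ 2 - A ^ 4 * τ
    let e : ℂ := A ^ 8 * τ - A ^ 4 * τ ^ 2
    let a : ℂ := -A ^ 4
    let δ : ℂ := A - 1
    c = 1 / δ ∧ φ * e + a = φ ^ 2 / δ := by
  intro A τ φ c e a δ
  have hφ : φ = Real.goldenRatio := by simp [φ]
  have hφ_sq : φ ^ 2 = φ + 1 := by rw [hφ]; exact_mod_cast Real.goldenRatio_sq
  have hτ : φ * τ = 1 := by
    have h : (1 + Real.sqrt 5 : ℂ) ≠ 0 := by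
      exact_mod_cast (by positivity : (0 : ℝ) < 1 + √5).ne'
    simp only [φ, τ]
    field_simp
  have hA : A ^ 2 + 1 = (1 - φ) * A := by
    have hz : -3 * Real.pi * I / 5 = ((-(3 * Real.pi / 5) : ℝ) : ℂ) * I := by push_cast; ring
    have h2cos : 2 * (Real.cos (3 * Real.pi / 5) : ℂ) = 1 - φ := by
      rw [hφ]; exact_mod_cast Real.two_mul_cos_three_pi_div_five
    simp only [A]
    rw [hz, exp_mul_I_sq_add_one, ← ofReal_cos, Real.cos_neg, h2cos]
  obtain ⟨hc, he⟩ := golden_root_mul_sub_one_identities hφ_sq hτ hA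
  exact ⟨eq_one_div_of_mul_eq_one_left hc, eq_div_of_mul_eq (right_ne_zero_of_mul_eq_one hc) he⟩
end

section
/- Let A = e^{−3πi/5}, τ = 2/(1+√5), a = −A⁴, b = A⁸, c = A⁸τ² − A⁴τ, d = A⁸τ^{3/2} + A⁴τ^{3/2}, e = A⁸τ − A⁴τ². Then the 2×2 matrix M = [[c, d], [d, e]] is unitary. -/
open Complex Matrix in
/-- The 2×2 block `M = [[c, d], [d, e]]` of the Fibonacci representation of an
elementary crossing is unitary, where `A = e^{-3πi/5}`, `τ = 2/(1+√5)`,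
`c = A⁸τ² - A⁴τ`, `d = A⁸τ^{3/2} + A⁴τ^{3/2}` (with `τ^{3/2} = τ·√τ`),
`e = A⁸τ - A⁴τ²`. -/
theorem fib_block_unitary :
    let A : ℂ := Complex.exp (-3 * Real.pi * Complex.I / 5)
    let τ : ℝ := 2 / (1 + Real.sqrt 5)
    let τ32 : ℂ := (τ * Real.sqrt τ : ℝ)
    let c : ℂ := A ^ 8 * (τ : ℂ) ^ 2 - A ^ 4 * (τ : ℂ)
    let d : ℂ := A ^ 8 * τ32 + A ^ 4 * τ32
    let e : ℂ := A ^ 8 * (τ : ℂ) - A ^ 4 * (τ : ℂ) ^ 2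
    let M : Matrix (Fin 2) (Fin 2) ℂ := !![c, d; d, e]
    M * Mᴴ = 1 := by
  intro A τ τ32 c d e M
  -- A * conj A = 1
  have hAB : A * (starRingEnd ℂ) A = 1 := by
    show Complex.exp _ * _ = 1
    rw [← Complex.exp_conj, ← Complex.exp_add]
    have hz : (-3 * (Real.pi : ℂ) * Complex.I / 5) +
        (starRingEnd ℂ) (-3 * (Real.pi : ℂ) * Complex.I / 5) = 0 := by
      simp only [map_div₀, _root_.map_mul, map_neg, map_ofNat, Complex.conj_I,
        Complex.conj_ofReal]
      ring
    rw [hz, Complex.exp_zero]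
  have h4 : A ^ 4 * (starRingEnd ℂ) A ^ 4 = 1 := by
    rw [← mul_pow, hAB, one_pow]
  have h8 : A ^ 8 * (starRingEnd ℂ) A ^ 8 = 1 := by
    rw [← mul_pow, hAB, one_pow]
  -- τ facts
  have hτpos : (0:ℝ) < τ := by
    have h5 : (0:ℝ) < Real.sqrt 5 := Real.sqrt_pos.mpr (by norm_num)
    show (0:ℝ) < 2 / (1 + Real.sqrt 5)
    positivity
  have htR : τ ^ 2 + τ = 1 := by
    have h5 : Real.sqrt 5 ^ 2 = 5 := Real.sq_sqrt (by norm_num)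
    have h5pos : (0:ℝ) < 1 + Real.sqrt 5 := by positivity
    show (2 / (1 + Real.sqrt 5)) ^ 2 + 2 / (1 + Real.sqrt 5) = 1
    field_simp
    nlinarith [h5]
  have ht : ((τ : ℝ) : ℂ) ^ 2 + ((τ : ℝ) : ℂ) = 1 := by
    exact_mod_cast congrArg (Complex.ofReal) htR
  have hs : ((Real.sqrt τ : ℝ) : ℂ) ^ 2 = ((τ : ℝ) : ℂ) := by
    rw [← Complex.ofReal_pow, Real.sq_sqrt hτpos.le]
  have hτ32 : τ32 = ((τ : ℝ) : ℂ) * ((Real.sqrt τ : ℝ) : ℂ) := by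
    show ((τ * Real.sqrt τ : ℝ) : ℂ) = _
    exact Complex.ofReal_mul _ _
  -- entry identities
  have h1 : c * (starRingEnd ℂ) c + d * (starRingEnd ℂ) d = 1 := by
    simp only [c, d, hτ32, map_sub, map_add, _root_.map_mul, map_pow,
      Complex.conj_ofReal]
    linear_combination
      ((τ:ℂ) ^ 4 + (τ:ℂ) ^ 3) * h8 + ((τ:ℂ) ^ 3 + (τ:ℂ) ^ 2) * h4 +
      (A ^ 8 * (starRingEnd ℂ) A ^ 8 * (τ:ℂ) ^ 2 +
        A ^ 8 * (starRingEnd ℂ) A ^ 4 * (τ:ℂ) ^ 2 +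
        A ^ 4 * (starRingEnd ℂ) A ^ 8 * (τ:ℂ) ^ 2 +
        A ^ 4 * (starRingEnd ℂ) A ^ 4 * (τ:ℂ) ^ 2) * hs +
      ((τ:ℂ) ^ 2 + (τ:ℂ) + 1) * ht
  have h2 : c * (starRingEnd ℂ) d + d * (starRingEnd ℂ) e = 0 := by
    simp only [c, d, e, hτ32, map_sub, map_add, _root_.map_mul, map_pow,
      Complex.conj_ofReal]
    linear_combination
      ((τ:ℂ) * ((Real.sqrt τ : ℝ):ℂ) * ((τ:ℂ) ^ 2 + (τ:ℂ))) * h8 -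
      ((τ:ℂ) * ((Real.sqrt τ : ℝ):ℂ) * ((τ:ℂ) ^ 2 + (τ:ℂ))) * h4
  have h3 : d * (starRingEnd ℂ) c + e * (starRingEnd ℂ) d = 0 := by
    simp only [c, d, e, hτ32, map_sub, map_add, _root_.map_mul, map_pow,
      Complex.conj_ofReal]
    linear_combination
      ((τ:ℂ) * ((Real.sqrt τ : ℝ):ℂ) * ((τ:ℂ) ^ 2 + (τ:ℂ))) * h8 -
      ((τ:ℂ) * ((Real.sqrt τ : ℝ):ℂ) * ((τ:ℂ) ^ 2 + (τ:ℂ))) * h4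
  have h5 : d * (starRingEnd ℂ) d + e * (starRingEnd ℂ) e = 1 := by
    simp only [d, e, hτ32, map_sub, map_add, _root_.map_mul, map_pow,
      Complex.conj_ofReal]
    linear_combination
      ((τ:ℂ) ^ 2 + (τ:ℂ) ^ 3) * h8 + ((τ:ℂ) ^ 3 + (τ:ℂ) ^ 4) * h4 +
      (A ^ 8 * (starRingEnd ℂ) A ^ 8 * (τ:ℂ) ^ 2 +
        A ^ 8 * (starRingEnd ℂ) A ^ 4 * (τ:ℂ) ^ 2 +
        A ^ 4 * (starRingEnd ℂ) A ^ 8 * (τ:ℂ) ^ 2 +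
        A ^ 4 * (starRingEnd ℂ) A ^ 4 * (τ:ℂ) ^ 2) * hs +
      ((τ:ℂ) ^ 2 + (τ:ℂ) + 1) * ht
  ext i j
  fin_cases i <;> fin_cases j <;>
    simp [M, Matrix.mul_apply, Fin.sum_univ_two, Matrix.conjTranspose_apply,
      Matrix.one_apply, h1, h2, h3, h5]
end

section
/- Let A = e^{−3πi/5}, τ = 2/(1+√5), D = φ = (1+√5)/2, c = A⁸τ² − A⁴τ, d = A⁸τ^{3/2} + A⁴τ^{3/2}, e = A⁸τ − A⁴τ². Let M = [[c,d],[d,e]] and E = A^{−1}·M − A^{−2}·I. Then E² = D·E. -/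
open Complex Matrix in
/-- Temperley–Lieb relation `E² = D·E` for the 2×2 block of the Fibonacci
representation: with `A = e^{-3πi/5}`, `τ = 2/(1+√5)`, `D = φ = (1+√5)/2`,
`M = [[c,d],[d,e]]` and `E = A⁻¹·M - A⁻²·I`, one has `E² = D·E`. -/
theorem fib_block_TL :
    let A : ℂ := Complex.exp (-3 * Real.pi * Complex.I / 5)
    let τ : ℝ := 2 / (1 + Real.sqrt 5)
    let τ32 : ℂ := (τ * Real.sqrt τ : ℝ)
    let D : ℂ := (1 + Real.sqrt 5) / 2
    let c : ℂ := A ^ 8 * (τ : ℂ) ^ 2 - A ^ 4 * (τ : ℂ)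
    let d : ℂ := A ^ 8 * τ32 + A ^ 4 * τ32
    let e : ℂ := A ^ 8 * (τ : ℂ) - A ^ 4 * (τ : ℂ) ^ 2
    let M : Matrix (Fin 2) (Fin 2) ℂ := !![c, d; d, e]
    let E : Matrix (Fin 2) (Fin 2) ℂ := A⁻¹ • M - (A⁻¹ ^ 2) • (1 : Matrix (Fin 2) (Fin 2) ℂ)
    E * E = D • E := by
  intro A τ τ32 D c d e M E
  have hA0 : A ≠ 0 := Complex.exp_ne_zero _
  -- A^5 = -1
  have h5 : A ^ 5 = -1 := by
    show Complex.exp _ ^ 5 = -1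
    rw [← Complex.exp_nat_mul,
      show ((5 : ℕ) : ℂ) * (-3 * (Real.pi : ℂ) * Complex.I / 5)
        = Real.pi * Complex.I + ((-2 : ℤ) : ℂ) * (2 * Real.pi * Complex.I) by push_cast; ring,
      Complex.exp_add, Complex.exp_int_mul_two_pi_mul_I, Complex.exp_pi_mul_I, mul_one]
  -- A^3 - A^2 = D
  have h3 : A ^ 3 = Complex.exp (((Real.pi / 5 : ℝ) : ℂ) * Complex.I) := by
    show Complex.exp _ ^ 3 = _
    rw [← Complex.exp_nat_mul,
      show ((3 : ℕ) : ℂ) * (-3 * (Real.pi : ℂ) * Complex.I / 5)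
        = ((Real.pi / 5 : ℝ) : ℂ) * Complex.I + ((-1 : ℤ) : ℂ) * (2 * Real.pi * Complex.I) by
          push_cast; ring,
      Complex.exp_add, Complex.exp_int_mul_two_pi_mul_I, mul_one]
  have h2 : A ^ 2 = Complex.exp (((4 * Real.pi / 5 : ℝ) : ℂ) * Complex.I) := by
    show Complex.exp _ ^ 2 = _
    rw [← Complex.exp_nat_mul,
      show ((2 : ℕ) : ℂ) * (-3 * (Real.pi : ℂ) * Complex.I / 5)
        = ((4 * Real.pi / 5 : ℝ) : ℂ) * Complex.I + ((-1 : ℤ) : ℂ) * (2 * Real.pi * Complex.I) by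
          push_cast; ring,
      Complex.exp_add, Complex.exp_int_mul_two_pi_mul_I, mul_one]
  have h45c : Real.cos (4 * Real.pi / 5) = -((1 + Real.sqrt 5) / 4) := by
    rw [show (4 * Real.pi / 5) = Real.pi - Real.pi / 5 by ring, Real.cos_pi_sub,
      Real.cos_pi_div_five]
  have h45s : Real.sin (4 * Real.pi / 5) = Real.sin (Real.pi / 5) := by
    rw [show (4 * Real.pi / 5) = Real.pi - Real.pi / 5 by ring, Real.sin_pi_sub]
  have hD : A ^ 3 - A ^ 2 = D := by
    rw [h3, h2, Complex.exp_mul_I, Complex.exp_mul_I, ← Complex.ofReal_cos,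
      ← Complex.ofReal_sin, ← Complex.ofReal_cos, ← Complex.ofReal_sin, h45c, h45s,
      Real.cos_pi_div_five]
    show _ = ((1 : ℂ) + (Real.sqrt 5 : ℂ)) / 2
    push_cast
    ring
  -- facts about τ
  have hs5 : Real.sqrt 5 ^ 2 = 5 := Real.sq_sqrt (by norm_num)
  have hsp : (0 : ℝ) < 1 + Real.sqrt 5 := by positivity
  have htR : τ ^ 2 + τ = 1 := by
    show (2 / (1 + Real.sqrt 5)) ^ 2 + 2 / (1 + Real.sqrt 5) = 1
    field_simp
    nlinarith [hs5]
  have ht : (τ : ℂ) ^ 2 + (τ : ℂ) = 1 := by exact_mod_cast htR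
  have hτpos : (0 : ℝ) < τ := by
    show (0 : ℝ) < 2 / (1 + Real.sqrt 5)
    positivity
  have hrR : Real.sqrt τ ^ 2 = τ := Real.sq_sqrt hτpos.le
  have hr : ((Real.sqrt τ : ℝ) : ℂ) ^ 2 = (τ : ℂ) := by exact_mod_cast hrR
  have hτ32 : τ32 = (τ : ℂ) * ((Real.sqrt τ : ℝ) : ℂ) := by
    show ((τ * Real.sqrt τ : ℝ) : ℂ) = _
    push_cast
    ring
  have hinv : A⁻¹ = -A ^ 4 := by
    field_simp
    linear_combination h5
  set t : ℂ := (τ : ℂ) with htdef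
  set r : ℂ := ((Real.sqrt τ : ℝ) : ℂ) with hrdef
  set N : Matrix (Fin 2) (Fin 2) ℂ := !![t ^ 2, t * r; t * r, t] with hNdef
  have hE : E = D • N := by
    show A⁻¹ • M - (A⁻¹ ^ 2) • (1 : Matrix (Fin 2) (Fin 2) ℂ) = D • N
    ext i j
    fin_cases i <;> fin_cases j <;>
      simp [hNdef, Matrix.sub_apply, Matrix.smul_apply, Matrix.one_apply, M, c, d, e, hτ32,
        hinv] <;> push_cast
    · -- entry (0,0)
      linear_combination (t ^ 2) * hD + (-A ^ 3) * ht +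
        (-t ^ 2 * A ^ 2 * (A ^ 5 - 1) + (t - 1) * A ^ 3) * h5
    · -- entry (0,1)
      linear_combination (t * r) * hD + (-(t * r) * (A ^ 2 * (A ^ 5 - 1) + A ^ 3)) * h5
    · -- entry (1,0)
      linear_combination (t * r) * hD + (-(t * r) * (A ^ 2 * (A ^ 5 - 1) + A ^ 3)) * h5
    · -- entry (1,1)
      linear_combination t * hD + (-A ^ 3) * ht +
        (-t * A ^ 2 * (A ^ 5 - 1) + t ^ 2 * A ^ 3 - A ^ 3) * h5
  have hN : N * N = N := by
    ext i j
    fin_cases i <;> fin_cases j <;>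
      simp [hNdef, Matrix.mul_apply, Fin.sum_univ_two]
    · linear_combination t ^ 2 * ht + t ^ 2 * hr
    · linear_combination t * r * ht
    · linear_combination t * r * ht
    · linear_combination t * ht + t ^ 2 * hr
  calc E * E = (D • N) * (D • N) := by rw [hE]
    _ = (D * D) • (N * N) := by
        rw [Matrix.smul_mul, Matrix.mul_smul, smul_smul]
    _ = D • (D • N) := by rw [hN, mul_smul]
    _ = D • E := by rw [hE]
end

section
/- Let E₁ = A^{−1}ρ(σ₁) − A^{−2}I and E₂ = A^{−1}ρ(σ₂) − A^{−2}I, where ρ(σ₁), ρ(σ₂) are the 8×8 Fibonacci representation matrices of the generators of B₃ and A = e^{−3πi/5}. Then E₁E₂E₁ = E₁ and E₂E₁E₂ = E₂. -/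
private lemma fibTL_m8_0 {α : Type*} (x0 x1 x2 x3 x4 x5 x6 x7 : α) :
    ![x0,x1,x2,x3,x4,x5,x6,x7] ⟨0, by norm_num⟩ = x0 := rfl
private lemma fibTL_m8_1 {α : Type*} (x0 x1 x2 x3 x4 x5 x6 x7 : α) :
    ![x0,x1,x2,x3,x4,x5,x6,x7] ⟨1, by norm_num⟩ = x1 := rfl
private lemma fibTL_m8_2 {α : Type*} (x0 x1 x2 x3 x4 x5 x6 x7 : α) :
    ![x0,x1,x2,x3,x4,x5,x6,x7] ⟨2, by norm_num⟩ = x2 := rfl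
private lemma fibTL_m8_3 {α : Type*} (x0 x1 x2 x3 x4 x5 x6 x7 : α) :
    ![x0,x1,x2,x3,x4,x5,x6,x7] ⟨3, by norm_num⟩ = x3 := rfl
private lemma fibTL_m8_4 {α : Type*} (x0 x1 x2 x3 x4 x5 x6 x7 : α) :
    ![x0,x1,x2,x3,x4,x5,x6,x7] ⟨4, by norm_num⟩ = x4 := rfl
private lemma fibTL_m8_5 {α : Type*} (x0 x1 x2 x3 x4 x5 x6 x7 : α) :
    ![x0,x1,x2,x3,x4,x5,x6,x7] ⟨5, by norm_num⟩ = x5 := rfl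
private lemma fibTL_m8_6 {α : Type*} (x0 x1 x2 x3 x4 x5 x6 x7 : α) :
    ![x0,x1,x2,x3,x4,x5,x6,x7] ⟨6, by norm_num⟩ = x6 := rfl
private lemma fibTL_m8_7 {α : Type*} (x0 x1 x2 x3 x4 x5 x6 x7 : α) :
    ![x0,x1,x2,x3,x4,x5,x6,x7] ⟨7, by norm_num⟩ = x7 := rfl
private lemma fibTL_v8_0 {α : Type*} (x0 x1 x2 x3 x4 x5 x6 x7 : α) :
    ![x0,x1,x2,x3,x4,x5,x6,x7] 0 = x0 := rfl
private lemma fibTL_v8_1 {α : Type*} (x0 x1 x2 x3 x4 x5 x6 x7 : α) :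
    ![x0,x1,x2,x3,x4,x5,x6,x7] 1 = x1 := rfl
private lemma fibTL_v8_2 {α : Type*} (x0 x1 x2 x3 x4 x5 x6 x7 : α) :
    ![x0,x1,x2,x3,x4,x5,x6,x7] 2 = x2 := rfl
private lemma fibTL_v8_3 {α : Type*} (x0 x1 x2 x3 x4 x5 x6 x7 : α) :
    ![x0,x1,x2,x3,x4,x5,x6,x7] 3 = x3 := rfl
private lemma fibTL_v8_4 {α : Type*} (x0 x1 x2 x3 x4 x5 x6 x7 : α) :
    ![x0,x1,x2,x3,x4,x5,x6,x7] 4 = x4 := rfl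
private lemma fibTL_v8_5 {α : Type*} (x0 x1 x2 x3 x4 x5 x6 x7 : α) :
    ![x0,x1,x2,x3,x4,x5,x6,x7] 5 = x5 := rfl
private lemma fibTL_v8_6 {α : Type*} (x0 x1 x2 x3 x4 x5 x6 x7 : α) :
    ![x0,x1,x2,x3,x4,x5,x6,x7] 6 = x6 := rfl
private lemma fibTL_v8_7 {α : Type*} (x0 x1 x2 x3 x4 x5 x6 x7 : α) :
    ![x0,x1,x2,x3,x4,x5,x6,x7] 7 = x7 := rfl

open Matrix in
set_option maxHeartbeats 2000000 in
private lemma fibTL_E1_shape (A a b c d e p t s : ℂ)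
    (ha : A⁻¹ * a - A⁻¹ ^ 2 = 0) (hb : A⁻¹ * b - A⁻¹ ^ 2 = p)
    (hc : A⁻¹ * c - A⁻¹ ^ 2 = t) (hd : A⁻¹ * d = s)
    (he : A⁻¹ * e - A⁻¹ ^ 2 = 1) :
    A⁻¹ • (!![b,0,0,0,0,0,0,0;
         0,a,0,0,0,0,0,0;
         0,0,a,0,0,0,0,0;
         0,0,0,e,0,d,0,0;
         0,0,0,0,a,0,0,0;
         0,0,0,d,0,c,0,0;
         0,0,0,0,0,0,e,d;
         0,0,0,0,0,0,d,c] : Matrix (Fin 8) (Fin 8) ℂ)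
      - (A⁻¹ ^ 2) • (1 : Matrix (Fin 8) (Fin 8) ℂ) =
    !![p,0,0,0,0,0,0,0;
       0,0,0,0,0,0,0,0;
       0,0,0,0,0,0,0,0;
       0,0,0,1,0,s,0,0;
       0,0,0,0,0,0,0,0;
       0,0,0,s,0,t,0,0;
       0,0,0,0,0,0,1,s;
       0,0,0,0,0,0,s,t] := by
  ext i j
  fin_cases i <;> fin_cases j <;>
    simp (config := { decide := true }) only [Matrix.sub_apply, Matrix.smul_apply, smul_eq_mul, Matrix.one_apply,
      Matrix.of_apply, fibTL_v8_0, fibTL_v8_1, fibTL_v8_2, fibTL_v8_3, fibTL_v8_4, fibTL_v8_5, fibTL_v8_6, fibTL_v8_7, fibTL_m8_0, fibTL_m8_1, fibTL_m8_2, fibTL_m8_3, fibTL_m8_4, fibTL_m8_5, fibTL_m8_6, fibTL_m8_7,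
      Fin.isValue, Fin.reduceEq, Fin.mk.injEq, reduceIte, ite_true, ite_false, mul_zero, mul_one, sub_zero] <;>
    first
      | rfl
      | linear_combination ha
      | linear_combination hb
      | linear_combination hc
      | linear_combination hd
      | linear_combination he

open Matrix in
set_option maxHeartbeats 2000000 in
private lemma fibTL_E2_shape (A a b c d e p t s : ℂ)
    (ha : A⁻¹ * a - A⁻¹ ^ 2 = 0) (hb : A⁻¹ * b - A⁻¹ ^ 2 = p)
    (hc : A⁻¹ * c - A⁻¹ ^ 2 = t) (hd : A⁻¹ * d = s)
    (he : A⁻¹ * e - A⁻¹ ^ 2 = 1) :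
    A⁻¹ • (!![c,d,0,0,0,0,0,0;
         d,e,0,0,0,0,0,0;
         0,0,a,0,0,0,0,0;
         0,0,0,e,d,0,0,0;
         0,0,0,d,c,0,0,0;
         0,0,0,0,0,a,0,0;
         0,0,0,0,0,0,a,0;
         0,0,0,0,0,0,0,b] : Matrix (Fin 8) (Fin 8) ℂ)
      - (A⁻¹ ^ 2) • (1 : Matrix (Fin 8) (Fin 8) ℂ) =
    !![t,s,0,0,0,0,0,0;
       s,1,0,0,0,0,0,0;
       0,0,0,0,0,0,0,0;
       0,0,0,1,s,0,0,0;
       0,0,0,s,t,0,0,0;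
       0,0,0,0,0,0,0,0;
       0,0,0,0,0,0,0,0;
       0,0,0,0,0,0,0,p] := by
  ext i j
  fin_cases i <;> fin_cases j <;>
    simp (config := { decide := true }) only [Matrix.sub_apply, Matrix.smul_apply, smul_eq_mul, Matrix.one_apply,
      Matrix.of_apply, fibTL_v8_0, fibTL_v8_1, fibTL_v8_2, fibTL_v8_3, fibTL_v8_4, fibTL_v8_5, fibTL_v8_6, fibTL_v8_7, fibTL_m8_0, fibTL_m8_1, fibTL_m8_2, fibTL_m8_3, fibTL_m8_4, fibTL_m8_5, fibTL_m8_6, fibTL_m8_7,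
      Fin.isValue, Fin.reduceEq, Fin.mk.injEq, reduceIte, ite_true, ite_false, mul_zero, mul_one, sub_zero] <;>
    first
      | rfl
      | linear_combination ha
      | linear_combination hb
      | linear_combination hc
      | linear_combination hd
      | linear_combination he

open Matrix in
set_option maxHeartbeats 4000000 in
private lemma fibTL_aux (p t s : ℂ) (ht : t ^ 2 = 1 - t) (hs : s ^ 2 = t)
    (hpt : p * t = 1) :
    let M1 : Matrix (Fin 8) (Fin 8) ℂ :=
      !![p,0,0,0,0,0,0,0;
         0,0,0,0,0,0,0,0;
         0,0,0,0,0,0,0,0;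
         0,0,0,1,0,s,0,0;
         0,0,0,0,0,0,0,0;
         0,0,0,s,0,t,0,0;
         0,0,0,0,0,0,1,s;
         0,0,0,0,0,0,s,t]
    let M2 : Matrix (Fin 8) (Fin 8) ℂ :=
      !![t,s,0,0,0,0,0,0;
         s,1,0,0,0,0,0,0;
         0,0,0,0,0,0,0,0;
         0,0,0,1,s,0,0,0;
         0,0,0,s,t,0,0,0;
         0,0,0,0,0,0,0,0;
         0,0,0,0,0,0,0,0;
         0,0,0,0,0,0,0,p]
    M1 * M2 * M1 = M1 ∧ M2 * M1 * M2 = M2 := by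
  intro M1 M2
  constructor <;>
    · ext i j
      fin_cases i <;> fin_cases j <;>
        simp only [M1, M2, Matrix.mul_apply, Fin.sum_univ_eight, Matrix.of_apply, fibTL_v8_0, fibTL_v8_1, fibTL_v8_2, fibTL_v8_3, fibTL_v8_4, fibTL_v8_5, fibTL_v8_6, fibTL_v8_7, fibTL_m8_0, fibTL_m8_1, fibTL_m8_2, fibTL_m8_3, fibTL_m8_4, fibTL_m8_5, fibTL_m8_6, fibTL_m8_7, fibTL_m8_0, fibTL_m8_1, fibTL_m8_2, fibTL_m8_3, fibTL_m8_4, fibTL_m8_5, fibTL_m8_6, fibTL_m8_7,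
        Fin.isValue, mul_zero, zero_mul, mul_one, one_mul, add_zero, zero_add] <;>
        first
          | rfl
          | ring1
          | linear_combination hs
          | linear_combination s * hpt
          | linear_combination t * hpt
          | linear_combination p * hpt
          | linear_combination p * hs + hpt
          | linear_combination s * hs
          | linear_combination p * s * hpt
          | linear_combination p * t * hpt

open Complex Matrix in
set_option maxHeartbeats 1000000 in
/-- The explicit 8×8 Fibonacci representation matrices of the generators
`σ₁, σ₂` of `B₃` give rise, via `Eᵢ = A⁻¹ρ(σᵢ) - A⁻²I`,
to matrices satisfying the Temperley–Lieb relations `E₁E₂E₁ = E₁` and `E₂E₁E₂ = E₂`. -/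
theorem fib_rep_TL_relation :
    let A : ℂ := Complex.exp (-3 * Real.pi * Complex.I / 5)
    let τ : ℝ := 2 / (1 + Real.sqrt 5)
    let τ32 : ℂ := (τ * Real.sqrt τ : ℝ)
    let a : ℂ := -A ^ 4
    let b : ℂ := A ^ 8
    let c : ℂ := A ^ 8 * (τ : ℂ) ^ 2 - A ^ 4 * (τ : ℂ)
    let d : ℂ := A ^ 8 * τ32 + A ^ 4 * τ32
    let e : ℂ := A ^ 8 * (τ : ℂ) - A ^ 4 * (τ : ℂ) ^ 2
    let ρ1 : Matrix (Fin 8) (Fin 8) ℂ :=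
      !![b,0,0,0,0,0,0,0;
         0,a,0,0,0,0,0,0;
         0,0,a,0,0,0,0,0;
         0,0,0,e,0,d,0,0;
         0,0,0,0,a,0,0,0;
         0,0,0,d,0,c,0,0;
         0,0,0,0,0,0,e,d;
         0,0,0,0,0,0,d,c]
    let ρ2 : Matrix (Fin 8) (Fin 8) ℂ :=
      !![c,d,0,0,0,0,0,0;
         d,e,0,0,0,0,0,0;
         0,0,a,0,0,0,0,0;
         0,0,0,e,d,0,0,0;
         0,0,0,d,c,0,0,0;
         0,0,0,0,0,a,0,0;
         0,0,0,0,0,0,a,0;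
         0,0,0,0,0,0,0,b]
    let E1 : Matrix (Fin 8) (Fin 8) ℂ := A⁻¹ • ρ1 - (A⁻¹ ^ 2) • (1 : Matrix (Fin 8) (Fin 8) ℂ)
    let E2 : Matrix (Fin 8) (Fin 8) ℂ := A⁻¹ • ρ2 - (A⁻¹ ^ 2) • (1 : Matrix (Fin 8) (Fin 8) ℂ)
    E1 * E2 * E1 = E1 ∧ E2 * E1 * E2 = E2 := by
  intro A τ τ32 a b c d e ρ1 ρ2 E1 E2
  have hsq5 : Real.sqrt 5 ^ 2 = 5 := Real.sq_sqrt (by norm_num)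
  have h5pos : (0:ℝ) < 1 + Real.sqrt 5 := by positivity
  have hτ0 : (0:ℝ) ≤ τ := by
    show (0:ℝ) ≤ 2 / (1 + Real.sqrt 5); positivity
  have hτr : τ ^ 2 = 1 - τ := by
    show (2 / (1 + Real.sqrt 5)) ^ 2 = 1 - 2 / (1 + Real.sqrt 5)
    rw [div_pow, eq_sub_iff_add_eq, div_add_div _ _ (by positivity) h5pos.ne',
      div_eq_one_iff_eq (by positivity)]
    ring_nf
    nlinarith [hsq5]
  have ht : ((τ:ℝ):ℂ) ^ 2 = 1 - ((τ:ℝ):ℂ) := by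
    exact_mod_cast congrArg (fun x : ℝ => (x:ℂ)) hτr
  have hs : ((Real.sqrt τ : ℝ):ℂ) ^ 2 = ((τ:ℝ):ℂ) := by
    have h := Real.sq_sqrt hτ0
    exact_mod_cast congrArg (fun x : ℝ => (x:ℂ)) h
  have hτ32 : τ32 = ((τ:ℝ):ℂ) * ((Real.sqrt τ : ℝ):ℂ) := by
    show ((τ * Real.sqrt τ : ℝ):ℂ) = _; push_cast; ring
  have hA5 : A ^ 5 = -1 := by
    show Complex.exp (-3 * Real.pi * Complex.I / 5) ^ 5 = -1
    rw [← Complex.exp_nat_mul]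
    have h : ((5:ℕ):ℂ) * (-3 * (Real.pi:ℂ) * Complex.I / 5) =
        (Real.pi:ℂ) * Complex.I + ((-2:ℤ):ℂ) * (2 * (Real.pi:ℂ) * Complex.I) := by
      push_cast; ring
    rw [h, Complex.exp_add, Complex.exp_pi_mul_I, Complex.exp_int_mul_two_pi_mul_I]
    ring
  have hA0 : A ≠ 0 := by
    intro h
    rw [h] at hA5; norm_num at hA5
  have hAinv : A⁻¹ = -A ^ 4 := by
    field_simp
    linear_combination hA5
  have h3 : A ^ 3 = Complex.exp (((Real.pi/5 : ℝ):ℂ) * Complex.I) := by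
    show Complex.exp (-3 * Real.pi * Complex.I / 5) ^ 3 = _
    rw [← Complex.exp_nat_mul]
    have h : ((3:ℕ):ℂ) * (-3 * (Real.pi:ℂ) * Complex.I / 5) =
        ((Real.pi/5 : ℝ):ℂ) * Complex.I + ((-1:ℤ):ℂ) * (2 * (Real.pi:ℂ) * Complex.I) := by
      push_cast; ring
    rw [h, Complex.exp_add, Complex.exp_int_mul_two_pi_mul_I, mul_one]
  have h2 : A ^ 2 = -Complex.exp (-((Real.pi/5 : ℝ):ℂ) * Complex.I) := by
    show Complex.exp (-3 * Real.pi * Complex.I / 5) ^ 2 = _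
    rw [← Complex.exp_nat_mul]
    have h : ((2:ℕ):ℂ) * (-3 * (Real.pi:ℂ) * Complex.I / 5) =
        -((Real.pi/5 : ℝ):ℂ) * Complex.I +
          ((Real.pi:ℂ) * Complex.I + ((-1:ℤ):ℂ) * (2 * (Real.pi:ℂ) * Complex.I)) := by
      push_cast; ring
    rw [h, Complex.exp_add, Complex.exp_add, Complex.exp_pi_mul_I,
      Complex.exp_int_mul_two_pi_mul_I]
    ring
  have hp : A ^ 3 - A ^ 2 = (((1 + Real.sqrt 5)/2 : ℝ):ℂ) := by
    rw [h3, h2, sub_neg_eq_add, ← Complex.two_cos, ← Complex.ofReal_cos,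
      Real.cos_pi_div_five]
    push_cast; ring
  have hpt : (A ^ 3 - A ^ 2) * ((τ:ℝ):ℂ) = 1 := by
    rw [hp]
    have hr : ((1 + Real.sqrt 5)/2) * τ = 1 := by
      show ((1 + Real.sqrt 5)/2) * (2 / (1 + Real.sqrt 5)) = 1
      field_simp
    exact_mod_cast congrArg (fun x : ℝ => (x:ℂ)) hr
  -- scalar values of the entries of E₁, E₂
  have ha' : A⁻¹ * a - A⁻¹ ^ 2 = 0 := by
    show A⁻¹ * (-A ^ 4) - A⁻¹ ^ 2 = 0
    rw [hAinv]; ring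
  have hb' : A⁻¹ * b - A⁻¹ ^ 2 = A ^ 3 - A ^ 2 := by
    show A⁻¹ * A ^ 8 - A⁻¹ ^ 2 = A ^ 3 - A ^ 2
    rw [hAinv]
    linear_combination (-A^7 - A^3 + A^2) * hA5
  have hc' : A⁻¹ * c - A⁻¹ ^ 2 = ((τ:ℝ):ℂ) := by
    show A⁻¹ * (A ^ 8 * ((τ:ℝ):ℂ) ^ 2 - A ^ 4 * ((τ:ℝ):ℂ)) - A⁻¹ ^ 2 = ((τ:ℝ):ℂ)
    rw [hAinv]
    linear_combination (-A^7*((τ:ℝ):ℂ)^2 + A^2*((τ:ℝ):ℂ)^2 + A^3*((τ:ℝ):ℂ) - A^3) * hA5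
      + (-A^3) * ht + ((τ:ℝ):ℂ) * hpt
  have hd' : A⁻¹ * d = ((Real.sqrt τ : ℝ):ℂ) := by
    show A⁻¹ * (A ^ 8 * τ32 + A ^ 4 * τ32) = ((Real.sqrt τ : ℝ):ℂ)
    rw [hτ32, hAinv]
    linear_combination (-A^7*((τ:ℝ):ℂ)*((Real.sqrt τ : ℝ):ℂ)
      + A^2*((τ:ℝ):ℂ)*((Real.sqrt τ : ℝ):ℂ)
      - A^3*((τ:ℝ):ℂ)*((Real.sqrt τ : ℝ):ℂ)) * hA5 + ((Real.sqrt τ : ℝ):ℂ) * hpt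
  have he' : A⁻¹ * e - A⁻¹ ^ 2 = 1 := by
    show A⁻¹ * (A ^ 8 * ((τ:ℝ):ℂ) - A ^ 4 * ((τ:ℝ):ℂ) ^ 2) - A⁻¹ ^ 2 = 1
    rw [hAinv]
    linear_combination (-A^7*((τ:ℝ):ℂ) + A^2*((τ:ℝ):ℂ) + A^3*((τ:ℝ):ℂ)^2 - A^3) * hA5
      + (-A^3) * ht + hpt
  have hE1 : E1 = _ :=
    fibTL_E1_shape A a b c d e (A ^ 3 - A ^ 2) ((τ:ℝ):ℂ) ((Real.sqrt τ : ℝ):ℂ)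
      ha' hb' hc' hd' he'
  have hE2 : E2 = _ :=
    fibTL_E2_shape A a b c d e (A ^ 3 - A ^ 2) ((τ:ℝ):ℂ) ((Real.sqrt τ : ℝ):ℂ)
      ha' hb' hc' hd' he'
  rw [hE1, hE2]
  exact fibTL_aux (A ^ 3 - A ^ 2) ((τ:ℝ):ℂ) ((Real.sqrt τ : ℝ):ℂ) ht hs hpt
end

section
/- Let θ = arccos(2 − √5). Then 2θ is not an integer multiple of 2π/k for any integer k with 1 ≤ k ≤ 30. -/
/-!
Put `φ = 2θ`, so that `cos φ = 2 (2 - √5)² - 1 = 17 - 8√5`. If `k φ ∈ 2πℤ` with `k ≥ 1`, then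
`T_k (17 - 8√5) = cos (k φ) = 1` for the Chebyshev polynomial `T_k ∈ ℤ[X]`. As `√5` is irrational,
this is an identity in `ℤ[√5]`, so it survives the conjugation `√5 ↦ -√5`: `T_k (17 + 8√5) = 1`.
But `T_k > 1` on `(1, ∞)`, since `T_k (cosh t) = cosh (k t)`.
-/

open Polynomial Polynomial.Chebyshev Real

namespace Polynomial.Chebyshev

theorem map_eval_T {R S : Type*} [CommRing R] [CommRing S] (f : R →+* S) (n : ℤ) (x : R) :
    f ((T R n).eval x) = (T S n).eval (f x) := by
  rw [← map_T f, eval_map, eval₂_hom]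

theorem eval_T_eq_one_of_injective {R S S' : Type*} [CommRing R] [CommRing S] [CommRing S']
    {f : R →+* S} (hf : Function.Injective f) (g : R →+* S') {n : ℤ} {x : R}
    (h : (T S n).eval (f x) = 1) : (T S' n).eval (g x) = 1 := by
  have hx : (T R n).eval x = 1 := hf <| by rw [map_eval_T, h, map_one]
  rw [← map_eval_T, hx, map_one]

end Polynomial.Chebyshev

namespace Zsqrtd

theorem cos_int_mul_ne_one {d : ℤ} (hd : ∀ n : ℤ, d ≠ n * n) (r r' : {r : ℝ // r * r = d})
    {z : ℤ√d} {φ : ℝ} (hz : lift r z = cos φ) (hz' : 1 < lift r' z) {n : ℤ} (hn : n ≠ 0) :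
    cos (n * φ) ≠ 1 := by
  intro h
  rw [← T_real_cos, ← hz] at h
  exact (one_lt_eval_T_real hn hz').ne' <| eval_T_eq_one_of_injective (lift_injective r hd) _ h

end Zsqrtd

theorem five_ne_mul_self (n : ℤ) : (5 : ℤ) ≠ n * n := fun h => by
  have : n ≤ 2 := by nlinarith
  have : -2 ≤ n := by nlinarith
  interval_cases n <;> omega

theorem mul_self_sqrt_five : √5 * √5 = ((5 : ℤ) : ℝ) := by
  rw [mul_self_sqrt] <;> norm_num

theorem neg_sqrt_five_mul_self : -√5 * -√5 = ((5 : ℤ) : ℝ) := by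
  rw [neg_mul_neg, mul_self_sqrt_five]

theorem cos_two_mul_arccos_two_sub_sqrt_five :
    cos (2 * arccos (2 - √5)) = 17 - 8 * √5 := by
  have h5 : √5 * √5 = 5 := mul_self_sqrt (by norm_num)
  have h0 : 0 ≤ √5 := sqrt_nonneg 5
  rw [cos_two_mul, cos_arccos (by nlinarith) (by nlinarith)]
  linear_combination 2 * h5

/-- With `θ = arccos(2 - √5)`, the angle `2θ` is not an integer multiple of
`2π/k` for any integer `1 ≤ k ≤ 30`. -/
theorem two_theta_not_rational_multiple :
    ∀ k : ℕ, 1 ≤ k → k ≤ 30 → ∀ m : ℤ,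
      2 * Real.arccos (2 - Real.sqrt 5) ≠ (m : ℝ) * (2 * Real.pi / (k : ℝ)) := by
  intro k hk _ m h
  have hk0 : (k : ℝ) ≠ 0 := by positivity
  have hcos : cos ((k : ℤ) * (2 * arccos (2 - √5))) = 1 := by
    rw [h, Int.cast_natCast, mul_div_assoc', mul_div_cancel₀ _ hk0]
    exact_mod_cast cos_int_mul_two_pi m
  refine Zsqrtd.cos_int_mul_ne_one (z := ⟨17, -8⟩) five_ne_mul_self ⟨√5, mul_self_sqrt_five⟩
    ⟨-√5, neg_sqrt_five_mul_self⟩ ?_ ?_ (by omega) hcos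
  · rw [cos_two_mul_arccos_two_sub_sqrt_five, Zsqrtd.lift_apply_apply]
    push_cast
    ring
  · simp only [Zsqrtd.lift_apply_apply]
    push_cast
    nlinarith [sqrt_nonneg 5]
end
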